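/- arXiv:2204.02599 — 10 statements merged into one kernel-verified Lean document; each statement's English description precedes it below -/
import Mathlib

section
/- Let R be a semiring with R ≠ {0} such that for all f, g ∈ R \ {0}, f+g ≠ 0 and f·g ≠ 0. Then any congruence 𝒞 on the 𝕋-extension R ×ₑ 𝕋 satisfies exactly one of: (1) whenever (f,a) ∼ (g,b), we have a = b; or (2) (f,a) ∼ (g,b) for all f, g ∈ R \ {0} and all a, b ∈ ℝ. -/
/-- The 𝕋-extension `R ×ₑ 𝕋` of a semiring-like structure with zero `zero`:
carrier `((R \ {zero}) × ℝ) ∪ {-∞}`, with `none` playing the role of `-∞`. -/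
abbrev TExt (R : Type*) (zero : R) : Type _ := Option ({f : R // f ≠ zero} × ℝ)

/-- Addition on the 𝕋-extension. -/
noncomputable def TExt.add {R : Type*} {zero : R} (radd : R → R → R)
    (h : ∀ f g : R, f ≠ zero → g ≠ zero → radd f g ≠ zero) :
    TExt R zero → TExt R zero → TExt R zero
  | none, x => x
  | x, none => x
  | some (f, a), some (g, b) =>
      if a > b then some (f, a)
      else if a < b then some (g, b)
      else some (⟨radd f.1 g.1, h _ _ f.2 g.2⟩, a)

/-- Multiplication on the 𝕋-extension. -/
def TExt.mul {R : Type*} {zero : R} (rmul : R → R → R)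
    (h : ∀ f g : R, f ≠ zero → g ≠ zero → rmul f g ≠ zero) :
    TExt R zero → TExt R zero → TExt R zero
  | none, _ => none
  | _, none => none
  | some (f, a), some (g, b) => some (⟨rmul f.1 g.1, h _ _ f.2 g.2⟩, a + b)

/-- A congruence on the 𝕋-extension: an equivalence relation compatible with
both operations. -/
noncomputable def TExt.IsCongruence {R : Type*} {zero : R} (radd rmul : R → R → R)
    (hadd : ∀ f g : R, f ≠ zero → g ≠ zero → radd f g ≠ zero)
    (hmul : ∀ f g : R, f ≠ zero → g ≠ zero → rmul f g ≠ zero)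
    (C : TExt R zero → TExt R zero → Prop) : Prop :=
  Equivalence C ∧
    (∀ a b c d, C a b → C c d → C (TExt.add radd hadd a c) (TExt.add radd hadd b d)) ∧
    (∀ a b c d, C a b → C c d → C (TExt.mul rmul hmul a c) (TExt.mul rmul hmul b d))

/-!
If `(f, a) ∼ (g, b)` with `b < a`, adding `(h, c)` for any `c` strictly between `b` and `a`
gives `(f, a) ∼ (h, c)`: the sum is dominated by `(f, a)` on one side and by `(h, c)` on the
other. So the whole open strip of levels between `b` and `a` collapses into one class.
Multiplying by `(1, t)` translates levels, so every level is related to all levels near it,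
and since `ℝ` is connected all elements `(f, a)` fall into a single class.
-/

namespace TExt

section Between

variable {R : Type*} {zero : R} {radd rmul : R → R → R}
  {hadd : ∀ f g : R, f ≠ zero → g ≠ zero → radd f g ≠ zero}
  {hmul : ∀ f g : R, f ≠ zero → g ≠ zero → rmul f g ≠ zero}
  {C : TExt R zero → TExt R zero → Prop}

theorem IsCongruence.rel_of_mem_Ioo (hC : IsCongruence radd rmul hadd hmul C)
    {f g : {x : R // x ≠ zero}} {a b c : ℝ} (hfg : C (some (f, a)) (some (g, b)))
    (hc : c ∈ Set.Ioo b a) (h : {x : R // x ≠ zero}) :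
    C (some (f, a)) (some (h, c)) := by
  have := hC.2.1 _ _ _ _ hfg (hC.1.refl (some (h, c)))
  simpa [TExt.add, hc.1, hc.2, lt_asymm hc.1] using this

end Between

section Translate

variable {R : Type*} [MulZeroOneClass R] [Nontrivial R] {radd : R → R → R}
  {hadd : ∀ f g : R, f ≠ 0 → g ≠ 0 → radd f g ≠ 0}
  {hmul : ∀ f g : R, f ≠ 0 → g ≠ 0 → f * g ≠ 0}
  {C : TExt R (0 : R) → TExt R (0 : R) → Prop}

theorem mul_some_one (k : {x : R // x ≠ 0}) (w t : ℝ) :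
    TExt.mul (· * ·) hmul (some (k, w)) (some (⟨1, one_ne_zero⟩, t)) = some (k, w + t) := by
  simp [TExt.mul]

theorem IsCongruence.rel_add_level (hC : IsCongruence radd (· * ·) hadd hmul C)
    {h h' : {x : R // x ≠ 0}} {u v : ℝ} (huv : C (some (h, u)) (some (h', v))) (t : ℝ) :
    C (some (h, u + t)) (some (h', v + t)) := by
  have := hC.2.2 _ _ _ _ huv (hC.1.refl (some (⟨1, one_ne_zero⟩, t)))
  rwa [mul_some_one, mul_some_one] at this

theorem IsCongruence.rel_of_abs_sub_lt (hC : IsCongruence radd (· * ·) hadd hmul C)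
    {f g : {x : R // x ≠ 0}} {a b : ℝ} (hfg : C (some (f, a)) (some (g, b))) (hba : b < a)
    {u v : ℝ} (huv : |v - u| < (a - b) / 2) (h h' : {x : R // x ≠ 0}) :
    C (some (h, u)) (some (h', v)) := by
  set m := (a + b) / 2 with hm_def
  have hm : m ∈ Set.Ioo b a := ⟨by linarith, by linarith⟩
  have hm' : m + (v - u) ∈ Set.Ioo b a := by
    rw [abs_lt] at huv
    exact ⟨by linarith, by linarith⟩
  have hrel : C (some (h, m)) (some (h', m + (v - u))) :=
    hC.1.trans (hC.1.symm (hC.rel_of_mem_Ioo hfg hm h)) (hC.rel_of_mem_Ioo hfg hm' h')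
  convert hC.rel_add_level hrel (u - m) using 4 <;> ring

theorem IsCongruence.rel_of_rel_of_ne (hC : IsCongruence radd (· * ·) hadd hmul C)
    {f g : {x : R // x ≠ 0}} {a b : ℝ} (hfg : C (some (f, a)) (some (g, b))) (hab : a ≠ b)
    (h h' : {x : R // x ≠ 0}) (u v : ℝ) : C (some (h, u)) (some (h', v)) := by
  wlog hba : b < a generalizing f g a b
  · exact this (hC.1.symm hfg) hab.symm (hab.lt_or_gt.resolve_right hba)
  let P : ℝ → ℝ → Prop := fun u v ↦ ∀ h h', C (some (h, u)) (some (h', v))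
  have hnear (u : ℝ) : ∀ᶠ v in nhds u, P u v ∧ P v u := by
    filter_upwards [Metric.ball_mem_nhds u (half_pos (sub_pos.2 hba))] with v hv
    rw [Metric.mem_ball, Real.dist_eq] at hv
    exact ⟨hC.rel_of_abs_sub_lt hfg hba hv, hC.rel_of_abs_sub_lt hfg hba (abs_sub_comm v u ▸ hv)⟩
  have htrans : IsTrans ℝ P := ⟨fun _ _ _ h₁ h₂ h h' ↦ hC.1.trans (h₁ h h') (h₂ h' h')⟩
  exact PreconnectedSpace.induction₂' P hnear htrans u v h h'

end Translate

end TExt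

/-- Any congruence on `R ×ₑ 𝕋` satisfies exactly one of:
(1) `(f,a) ∼ (g,b)` implies `a = b`; (2) `(f,a) ∼ (g,b)` for all nonzero
`f, g` and all reals `a, b`. -/
theorem TExt_congruence_dichotomy {R : Type*} [Semiring R] [Nontrivial R]
    (hadd : ∀ f g : R, f ≠ 0 → g ≠ 0 → f + g ≠ 0)
    (hmul : ∀ f g : R, f ≠ 0 → g ≠ 0 → f * g ≠ 0)
    (C : TExt R (0 : R) → TExt R (0 : R) → Prop)
    (hC : TExt.IsCongruence (· + ·) (· * ·) hadd hmul C) :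
    Xor'
      (∀ (f g : {x : R // x ≠ 0}) (a b : ℝ), C (some (f, a)) (some (g, b)) → a = b)
      (∀ (f g : {x : R // x ≠ 0}) (a b : ℝ), C (some (f, a)) (some (g, b))) := by
  by_cases hlevel : ∀ (f g : {x : R // x ≠ 0}) (a b : ℝ), C (some (f, a)) (some (g, b)) → a = b
  · refine Or.inl ⟨hlevel, fun hall ↦ ?_⟩
    exact zero_ne_one (hlevel ⟨1, one_ne_zero⟩ ⟨1, one_ne_zero⟩ 0 1 (hall _ _ 0 1))
  · push Not at hlevel
    obtain ⟨f, g, a, b, hfg, hab⟩ := hlevel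
    exact Or.inr ⟨hC.rel_of_rel_of_ne hfg hab, fun hlevel ↦ hab (hlevel f g a b hfg)⟩
end

section
/- Let 𝒞 be a partial congruence on R ×ₑ 𝕋 and let 𝒞' be the corresponding congruence on R (via Φ(𝒞) = {(f,g) : ((f,0),(g,0)) ∈ 𝒞} ∪ {(0,0)}). Then the quotient semiring (R ×ₑ 𝕋)/𝒞 is isomorphic to (R/𝒞') ×ₑ 𝕋. -/
/-- `Φ(𝒞) = {(f,g) : ((f,0),(g,0)) ∈ 𝒞} ∪ {(0,0)}`. -/
def PhiRel {R : Type*} [Semiring R] (C : TExt R (0 : R) → TExt R (0 : R) → Prop)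
    (f g : R) : Prop :=
  (∃ (hf : f ≠ 0) (hg : g ≠ 0), C (some (⟨f, hf⟩, (0 : ℝ))) (some (⟨g, hg⟩, (0 : ℝ)))) ∨
    (f = 0 ∧ g = 0)

/-- If `𝒞` is a partial congruence on `R ×ₑ 𝕋` and `𝒞' = Φ(𝒞)`
the corresponding congruence on `R`, then `(R ×ₑ 𝕋)/𝒞 ≅ (R/𝒞') ×ₑ 𝕋`.
Here `R/𝒞'` is presented as a type `S` with a surjection `q : R → S` whose
kernel is `𝒞'` and which preserves the operations. -/
theorem TExt_quotient_iso {R : Type u} [Semiring R] [Nontrivial R]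
    (hadd : ∀ f g : R, f ≠ 0 → g ≠ 0 → f + g ≠ 0)
    (hmul : ∀ f g : R, f ≠ 0 → g ≠ 0 → f * g ≠ 0)
    (C : TExt R (0 : R) → TExt R (0 : R) → Prop)
    (hC : TExt.IsCongruence (· + ·) (· * ·) hadd hmul C)
    (hpartial : ∀ (f g : {x : R // x ≠ 0}) (a b : ℝ),
      C (some (f, a)) (some (g, b)) → a = b) :
    ∃ (S : Type u) (zS : S) (addS mulS : S → S → S) (q : R → S),
      Function.Surjective q ∧
      (∀ f g : R, q f = q g ↔ PhiRel C f g) ∧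
      q 0 = zS ∧
      (∀ f g : R, q (f + g) = addS (q f) (q g)) ∧
      (∀ f g : R, q (f * g) = mulS (q f) (q g)) ∧
      ∃ (haddS : ∀ f g : S, f ≠ zS → g ≠ zS → addS f g ≠ zS)
        (hmulS : ∀ f g : S, f ≠ zS → g ≠ zS → mulS f g ≠ zS)
        (e : Quot C ≃ TExt S zS),
        (∀ x y, e (Quot.mk C (TExt.add (· + ·) hadd x y)) =
            TExt.add addS haddS (e (Quot.mk C x)) (e (Quot.mk C y))) ∧
        (∀ x y, e (Quot.mk C (TExt.mul (· * ·) hmul x y)) =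
            TExt.mul mulS hmulS (e (Quot.mk C x)) (e (Quot.mk C y))) := by
  classical
  obtain ⟨hEq, hCadd, hCmul⟩ := hC
  -- exponent shift
  have shift : ∀ (f g : {x : R // x ≠ 0}) (a b c : ℝ),
      C (some (f, a)) (some (g, b)) → C (some (f, a + c)) (some (g, b + c)) := by
    intro f g a b c h
    have h1 := hCmul _ _ (some (⟨1, one_ne_zero⟩, c)) (some (⟨1, one_ne_zero⟩, c)) h (hEq.refl _)
    have ef : (⟨f.1 * 1, hmul _ _ f.2 one_ne_zero⟩ : {x : R // x ≠ 0}) = f :=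
      Subtype.ext (mul_one _)
    have eg : (⟨g.1 * 1, hmul _ _ g.2 one_ne_zero⟩ : {x : R // x ≠ 0}) = g :=
      Subtype.ext (mul_one _)
    simpa [TExt.mul, ef, eg] using h1
  -- -∞ is not related to any finite element
  have notNS : ∀ (f : {x : R // x ≠ 0}) (a : ℝ), ¬ C none (some (f, a)) := by
    intro f a h
    have h1 := hCadd _ _ (some (f, a - 1)) (some (f, a - 1)) h (hEq.refl _)
    have e1 : TExt.add (· + ·) hadd none (some (f, a - 1)) = some (f, a - 1) := rfl
    have e2 : TExt.add (· + ·) hadd (some (f, a)) (some (f, a - 1)) = some (f, a) := by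
      simp [TExt.add, sub_lt_self a one_pos]
    rw [e1, e2] at h1
    have := hpartial _ _ _ _ h1
    linarith
  have phiZero : ∀ f : R, PhiRel C f 0 ↔ f = 0 := by
    intro f
    constructor
    · rintro (⟨_, hg, _⟩ | ⟨hf, _⟩)
      · exact absurd rfl hg
      · exact hf
    · intro h; exact Or.inr ⟨h, rfl⟩
  have phiEquiv : Equivalence (PhiRel C) := by
    constructor
    · intro f
      by_cases h : f = 0
      · exact Or.inr ⟨h, h⟩
      · exact Or.inl ⟨h, h, hEq.refl _⟩
    · rintro f g (⟨hf, hg, h⟩ | ⟨hf, hg⟩)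
      · exact Or.inl ⟨hg, hf, hEq.symm h⟩
      · exact Or.inr ⟨hg, hf⟩
    · rintro f g k (⟨hf, hg, h1⟩ | ⟨hf, hg⟩) (⟨hg', hk, h2⟩ | ⟨hg', hk⟩)
      · exact Or.inl ⟨hf, hk, hEq.trans h1 h2⟩
      · exact absurd hg' hg
      · exact absurd hg hg'
      · exact Or.inr ⟨hf, hk⟩
  have phiAdd : ∀ {f g f' g' : R}, PhiRel C f g → PhiRel C f' g' →
      PhiRel C (f + f') (g + g') := by
    rintro f g f' g' (⟨hf, hg, h1⟩ | ⟨hf, hg⟩) (⟨hf', hg', h2⟩ | ⟨hf', hg'⟩)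
    · refine Or.inl ⟨hadd _ _ hf hf', hadd _ _ hg hg', ?_⟩
      have h3 := hCadd _ _ _ _ h1 h2
      simpa [TExt.add] using h3
    · subst hf'; subst hg'
      rw [add_zero, add_zero]; exact Or.inl ⟨hf, hg, h1⟩
    · subst hf; subst hg
      rw [zero_add, zero_add]; exact Or.inl ⟨hf', hg', h2⟩
    · subst hf; subst hg; subst hf'; subst hg'
      rw [add_zero]; exact Or.inr ⟨rfl, rfl⟩
  have phiMul : ∀ {f g f' g' : R}, PhiRel C f g → PhiRel C f' g' →
      PhiRel C (f * f') (g * g') := by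
    rintro f g f' g' (⟨hf, hg, h1⟩ | ⟨hf, hg⟩) (⟨hf', hg', h2⟩ | ⟨hf', hg'⟩)
    · refine Or.inl ⟨hmul _ _ hf hf', hmul _ _ hg hg', ?_⟩
      have h3 := hCmul _ _ _ _ h1 h2
      simpa [TExt.mul] using h3
    · subst hf'; subst hg'
      rw [mul_zero, mul_zero]; exact Or.inr ⟨rfl, rfl⟩
    · subst hf; subst hg
      rw [zero_mul, zero_mul]; exact Or.inr ⟨rfl, rfl⟩
    · subst hf; subst hg; subst hf'; subst hg'
      rw [mul_zero]; exact Or.inr ⟨rfl, rfl⟩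
  -- the quotient semiring
  set S : Type u := Quot (PhiRel C) with hS
  set zS : S := Quot.mk _ 0 with hzS
  set addS : S → S → S :=
    Quot.map₂ (· + ·) (fun a _ _ h => phiAdd (phiEquiv.refl a) h)
      (fun _ _ b h => phiAdd h (phiEquiv.refl b)) with haS
  set mulS : S → S → S :=
    Quot.map₂ (· * ·) (fun a _ _ h => phiMul (phiEquiv.refl a) h)
      (fun _ _ b h => phiMul h (phiEquiv.refl b)) with hmS
  have qiff : ∀ f g : R, Quot.mk (PhiRel C) f = Quot.mk (PhiRel C) g ↔ PhiRel C f g :=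
    fun f g => Quot.eq.trans phiEquiv.eqvGen_iff
  have hne : ∀ r : R, (Quot.mk (PhiRel C) r = zS) ↔ r = 0 :=
    fun r => (qiff r 0).trans (phiZero r)
  have haddS : ∀ f g : S, f ≠ zS → g ≠ zS → addS f g ≠ zS := by
    intro f g
    induction f using Quot.ind with | _ a =>
    induction g using Quot.ind with | _ b =>
    intro hf hg h
    exact hadd a b (fun e => hf ((hne a).mpr e)) (fun e => hg ((hne b).mpr e))
      ((hne (a + b)).mp h)
  have hmulS : ∀ f g : S, f ≠ zS → g ≠ zS → mulS f g ≠ zS := by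
    intro f g
    induction f using Quot.ind with | _ a =>
    induction g using Quot.ind with | _ b =>
    intro hf hg h
    exact hmul a b (fun e => hf ((hne a).mpr e)) (fun e => hg ((hne b).mpr e))
      ((hne (a * b)).mp h)
  -- the forward map
  set F : TExt R (0 : R) → TExt S zS := fun x =>
    match x with
    | none => none
    | some (f, a) => some (⟨Quot.mk _ f.1, fun h => f.2 ((hne f.1).mp h)⟩, a) with hF
  have Fwd : ∀ x y, C x y → F x = F y := by
    intro x y h
    match x, y with
    | none, none => rfl
    | none, some (g, b) => exact absurd h (notNS g b)
    | some (f, a), none => exact absurd (hEq.symm h) (notNS f a)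
    | some (f, a), some (g, b) =>
      obtain rfl : a = b := hpartial _ _ _ _ h
      have h0 : C (some (f, (0 : ℝ))) (some (g, (0 : ℝ))) := by
        have := shift f g a a (-a) h
        simpa using this
      have hrel : PhiRel C f.1 g.1 := Or.inl ⟨f.2, g.2, h0⟩
      simp only [hF, Option.some.injEq, Prod.mk.injEq]
      exact ⟨Subtype.ext (Quot.sound hrel), trivial⟩
  -- the inverse map
  set phi : R → ℝ → Quot C := fun r a =>
    if h : r = 0 then Quot.mk C none else Quot.mk C (some (⟨r, h⟩, a)) with hphi
  have phiwd : ∀ (a : ℝ) (r r' : R), PhiRel C r r' → phi r a = phi r' a := by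
    rintro a r r' (⟨hr, hr', h⟩ | ⟨hr, hr'⟩)
    · simp only [hphi, dif_neg hr, dif_neg hr']
      refine Quot.sound ?_
      have := shift ⟨r, hr⟩ ⟨r', hr'⟩ 0 0 a h
      simpa using this
    · subst hr; subst hr'; rfl
  set G : TExt S zS → Quot C := fun y =>
    match y with
    | none => Quot.mk C none
    | some (s, a) => Quot.lift (fun r => phi r a) (phiwd a) s.1 with hG
  have linv : ∀ x : Quot C, G (Quot.lift F Fwd x) = x := by
    refine Quot.ind ?_
    intro x
    match x with
    | none => rfl
    | some (f, a) =>
      show Quot.lift (fun r => phi r a) (phiwd a) (Quot.mk _ f.1) = Quot.mk C (some (f, a))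
      show phi f.1 a = _
      simp only [hphi, dif_neg f.2]
  have rinv : ∀ y : TExt S zS, Quot.lift F Fwd (G y) = y := by
    intro y
    match y with
    | none => rfl
    | some (s, a) =>
      obtain ⟨r, hr⟩ := Quot.exists_rep s.1
      have hr0 : r ≠ 0 := fun h => s.2 (by rw [← hr, (hne r).mpr h])
      show Quot.lift F Fwd (Quot.lift (fun r => phi r a) (phiwd a) s.1) = some (s, a)
      rw [← hr]
      show Quot.lift F Fwd (phi r a) = some (s, a)
      rw [hphi]
      simp only [dif_neg hr0]
      show F (some (⟨r, hr0⟩, a)) = some (s, a)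
      simp only [hF, Option.some.injEq, Prod.mk.injEq]
      exact ⟨Subtype.ext hr, trivial⟩
  set e : Quot C ≃ TExt S zS := ⟨Quot.lift F Fwd, G, linv, rinv⟩ with he
  have eadd : ∀ x y, e (Quot.mk C (TExt.add (· + ·) hadd x y)) =
      TExt.add addS haddS (e (Quot.mk C x)) (e (Quot.mk C y)) := by
    intro x y
    show F (TExt.add (· + ·) hadd x y) = TExt.add addS haddS (F x) (F y)
    match x, y with
    | none, none => rfl
    | none, some (g, b) => rfl
    | some (f, a), none => rfl
    | some (f, a), some (g, b) =>
      rcases lt_trichotomy a b with hab | hab | hab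
      · have h1 : ¬ a > b := not_lt.2 hab.le
        simp only [TExt.add, hF, if_neg h1, if_pos hab]
      · subst hab
        have h1 : ¬ a > a := lt_irrefl a
        simp only [TExt.add, hF, if_neg h1]
        rfl
      · simp only [TExt.add, hF, if_pos hab]
  have emul : ∀ x y, e (Quot.mk C (TExt.mul (· * ·) hmul x y)) =
      TExt.mul mulS hmulS (e (Quot.mk C x)) (e (Quot.mk C y)) := by
    intro x y
    show F (TExt.mul (· * ·) hmul x y) = TExt.mul mulS hmulS (F x) (F y)
    match x, y with
    | none, none => rfl
    | none, some (g, b) => rfl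
    | some (f, a), none => rfl
    | some (f, a), some (g, b) => rfl
  exact ⟨S, zS, addS, mulS, Quot.mk _, fun s => Quot.exists_rep s, qiff, rfl,
    fun f g => rfl, fun f g => rfl, haddS, hmulS, e, eadd, emul⟩
end

section
/- For any tropical Laurent polynomial P in n variables and any p ∈ ℝⁿ, there exists an open neighborhood U of p such that the function defined by P and the function defined by in_p(P) agree on U. -/
/-!
Only finitely many terms of `P` are not `⊥`, so `P(p)` is attained by some term `a`. Each term is
continuous in `q`, so the finitely many terms lying strictly below the term `a` at `p` stay below
it near `p`; there the maximum is attained among the terms that survive in `in_p(P)`.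
-/

noncomputable section
open scoped Classical

/-- The inner product `u · x` of an integer vector and a real vector. -/
def dotRZ {n : ℕ} (u : Fin n → ℤ) (x : Fin n → ℝ) : ℝ := ∑ i, (u i : ℝ) * x i

/-- The value at `x` of the tropical Laurent polynomial with coefficient
function `P : ℤⁿ → 𝕋` (𝕋 = ℝ ∪ {-∞}, embedded in `EReal`):
`P(x) = sup_u (P u + u · x)`. -/
def teval {n : ℕ} (P : (Fin n → ℤ) → EReal) (x : Fin n → ℝ) : EReal :=
  ⨆ u : Fin n → ℤ, P u + ((dotRZ u x : ℝ) : EReal)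

/-- The initial form `in_p(P)`: keep exactly the terms attaining `P(p)`. -/
def initForm {n : ℕ} (p : Fin n → ℝ) (P : (Fin n → ℤ) → EReal) :
    (Fin n → ℤ) → EReal :=
  fun u => if P u + ((dotRZ u p : ℝ) : EReal) = teval P p then P u else ⊥

/-- Tropical addition `⊕` of Laurent polynomials: coefficientwise max. -/
def tadd {n : ℕ} (P Q : (Fin n → ℤ) → EReal) : (Fin n → ℤ) → EReal :=
  fun u => max (P u) (Q u)

/-- Tropical multiplication `⊙` of Laurent polynomials: max-plus convolution. -/
def tmul {n : ℕ} (P Q : (Fin n → ℤ) → EReal) : (Fin n → ℤ) → EReal :=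
  fun u => ⨆ (v : Fin n → ℤ) (w : Fin n → ℤ) (_ : v + w = u), P v + Q w

open Topology

theorem exists_eq_iSup_of_finite_ne_bot {ι α : Type*} [Nonempty ι] [CompleteLinearOrder α]
    {f : ι → α} (hf : {i | f i ≠ ⊥}.Finite) : ∃ i, f i = ⨆ i, f i := by
  have hrange : (Set.range f).Finite := by
    refine ((hf.image f).insert ⊥).subset ?_
    rintro _ ⟨i, rfl⟩
    by_cases hi : f i = ⊥
    · exact Or.inl hi
    · exact Or.inr ⟨i, hi, rfl⟩
  exact (Set.range_nonempty f).csSup_mem hrange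

theorem eventually_forall_lt_of_lt {X ι α : Type*} [TopologicalSpace X] [LinearOrder α]
    [TopologicalSpace α] [OrderClosedTopology α] {s : Set ι} (hs : s.Finite) {f : ι → X → α}
    {g : X → α} {p : X} (hf : ∀ i ∈ s, ContinuousAt (f i) p) (hg : ContinuousAt g p) :
    ∀ᶠ q in 𝓝 p, ∀ i ∈ s, f i p < g p → f i q < g q := by
  refine hs.eventually_all.mpr fun i hi => ?_
  by_cases hlt : f i p < g p
  · exact ((hf i hi).eventually_lt hg hlt).mono fun q hq _ => hq
  · exact Filter.Eventually.of_forall fun q h => absurd h hlt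

theorem continuous_dotRZ {n : ℕ} (u : Fin n → ℤ) : Continuous (dotRZ u) := by
  unfold dotRZ
  fun_prop

theorem continuous_add_dotRZ {n : ℕ} (c : EReal) (u : Fin n → ℤ) :
    Continuous fun x => c + ((dotRZ u x : ℝ) : EReal) := by
  refine continuous_iff_continuousAt.mpr fun x => ?_
  have hadd := EReal.continuousAt_add (p := (c, ((dotRZ u x : ℝ) : EReal)))
    (Or.inr (EReal.coe_ne_bot _)) (Or.inr (EReal.coe_ne_top _))
  exact hadd.comp (f := fun y => (c, ((dotRZ u y : ℝ) : EReal)))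
    (continuousAt_const.prodMk (continuous_coe_real_ereal.comp (continuous_dotRZ u)).continuousAt)

theorem le_teval {n : ℕ} (P : (Fin n → ℤ) → EReal) (u : Fin n → ℤ) (x : Fin n → ℝ) :
    P u + ((dotRZ u x : ℝ) : EReal) ≤ teval P x :=
  le_iSup (fun v => P v + ((dotRZ v x : ℝ) : EReal)) u

theorem teval_mono {n : ℕ} {P Q : (Fin n → ℤ) → EReal} (h : P ≤ Q) (x : Fin n → ℝ) :
    teval P x ≤ teval Q x :=
  iSup_mono fun u => add_le_add_left (h u) _

theorem exists_add_dotRZ_eq_teval {n : ℕ} {P : (Fin n → ℤ) → EReal}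
    (hfin : {u | P u ≠ ⊥}.Finite) (x : Fin n → ℝ) :
    ∃ a, P a + ((dotRZ a x : ℝ) : EReal) = teval P x := by
  refine exists_eq_iSup_of_finite_ne_bot (hfin.subset fun u hu h => hu ?_)
  rw [h, EReal.bot_add]

theorem initForm_le {n : ℕ} (p : Fin n → ℝ) (P : (Fin n → ℤ) → EReal) : initForm p P ≤ P := by
  intro u
  unfold initForm
  split_ifs
  exacts [le_rfl, bot_le]

theorem initForm_apply_of_eq {n : ℕ} {p : Fin n → ℝ} {P : (Fin n → ℤ) → EReal} {u : Fin n → ℤ}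
    (hu : P u + ((dotRZ u p : ℝ) : EReal) = teval P p) : initForm p P u = P u :=
  if_pos hu

theorem eval_eq_initForm_near_general (n : ℕ) (p : Fin n → ℝ) (P : (Fin n → ℤ) → EReal)
    (hfin : {u | P u ≠ ⊥}.Finite) :
    ∃ U : Set (Fin n → ℝ), IsOpen U ∧ p ∈ U ∧
      ∀ q ∈ U, teval P q = teval (initForm p P) q := by
  obtain ⟨a, ha⟩ := exists_add_dotRZ_eq_teval hfin p
  obtain ⟨U, hU, hUo, hpU⟩ := eventually_nhds_iff.mp <| eventually_forall_lt_of_lt hfin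
    (fun u _ => (continuous_add_dotRZ (P u) u).continuousAt)
    (continuous_add_dotRZ (P a) a).continuousAt
  refine ⟨U, hUo, hpU, fun q hq => le_antisymm (iSup_le fun u => ?_)
    (teval_mono (initForm_le p P) q)⟩
  by_cases hactive : P u + ((dotRZ u p : ℝ) : EReal) = teval P p
  · exact (initForm_apply_of_eq hactive).symm ▸ le_teval (initForm p P) u q
  by_cases hbot : P u = ⊥
  · simp [hbot]
  calc P u + ((dotRZ u q : ℝ) : EReal)
      ≤ P a + ((dotRZ a q : ℝ) : EReal) :=
        (hU q hq u hbot (ha ▸ (le_teval P u p).lt_of_ne hactive)).le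
    _ = initForm p P a + ((dotRZ a q : ℝ) : EReal) := by rw [initForm_apply_of_eq ha]
    _ ≤ teval (initForm p P) q := le_teval (initForm p P) a q

/-- A tropical Laurent polynomial agrees with its initial form
at `p` on some open (Euclidean) neighbourhood of `p`. -/
theorem eval_eq_initForm_near (n : ℕ) (p : Fin n → ℝ) (P : (Fin n → ℤ) → EReal)
    (hfin : {u | P u ≠ ⊥}.Finite) (htop : ∀ u, P u ≠ ⊤) :
    ∃ U : Set (Fin n → ℝ), IsOpen U ∧ p ∈ U ∧
      ∀ q ∈ U, teval P q = teval (initForm p P) q :=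
  eval_eq_initForm_near_general n p P hfin

end
end

section
/- Let A be a finite set, let ℤ₀^A be the set of functions A → ℤ of degree 0 (a group under pointwise addition), let R₀ ⊆ ℤ₀^A be a subgroup, and let R be the subsemiring of ℤ_pos^A (functions of degree ≥ 0, with operations pointwise max and pointwise addition, together with -∞) generated by R₀. Then R ∩ ℤ₀^A = R₀, and R₀ is exactly the group of multiplicatively invertible elements of R. -/
/-- Membership in the subsemiring of `ℤ_pos^A` (modelled inside
`WithBot (A → ℤ)`, with semiring addition = pointwise max `⊔` extended by the
bottom element `-∞`, and semiring multiplication = pointwise `+`) generated by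
a set `R₀` of functions.  The generated subsemiring contains the additive
identity `⊥ = -∞`, the elements of `R₀`, and is closed under the two
operations. -/
inductive GenSemiring {A : Type*} (R₀ : Set (A → ℤ)) : WithBot (A → ℤ) → Prop
  | bot : GenSemiring R₀ ⊥
  | of (f : A → ℤ) : f ∈ R₀ → GenSemiring R₀ (↑f)
  | sup {x y : WithBot (A → ℤ)} :
      GenSemiring R₀ x → GenSemiring R₀ y → GenSemiring R₀ (x ⊔ y)
  | add {x y : WithBot (A → ℤ)} :
      GenSemiring R₀ x → GenSemiring R₀ y → GenSemiring R₀ (x + y)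

/-- Every element of the generated subsemiring is either `⊥` or a function
bounded below (pointwise) by some element of `R₀`. -/
lemma gen_struct {A : Type*} (R₀ : AddSubgroup (A → ℤ)) :
    ∀ x : WithBot (A → ℤ), GenSemiring (R₀ : Set (A → ℤ)) x →
      x = ⊥ ∨ ∃ f g : A → ℤ, x = ↑f ∧ g ∈ R₀ ∧ g ≤ f := by
  intro x hx
  induction hx with
  | bot => exact Or.inl rfl
  | of f hf => exact Or.inr ⟨f, f, rfl, hf, le_refl f⟩
  | sup hx hy ihx ihy =>
    rcases ihx with rfl | ⟨f, g, rfl, hg, hle⟩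
    · simpa using ihy
    rcases ihy with rfl | ⟨f', g', rfl, hg', hle'⟩
    · exact Or.inr ⟨f, g, by simp, hg, hle⟩
    · exact Or.inr ⟨f ⊔ f', g, by rw [WithBot.coe_sup], hg, hle.trans le_sup_left⟩
  | add hx hy ihx ihy =>
    rcases ihx with rfl | ⟨f, g, rfl, hg, hle⟩
    · simp
    rcases ihy with rfl | ⟨f', g', rfl, hg', hle'⟩
    · simp
    · exact Or.inr ⟨f + f', g + g', by rw [← WithBot.coe_add], add_mem hg hg',
        add_le_add hle hle'⟩

/-- Let `R₀` be a subgroup of the group `ℤ₀^A` of degree-0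
functions and `R` the subsemiring of `ℤ_pos^A` it generates.  Then
`R ∩ ℤ₀^A = R₀`, and `R₀` is exactly the set of multiplicatively invertible
elements of `R` (the multiplicative identity being the zero function, and
multiplication pointwise addition). -/
theorem gen_semiring_units (A : Type*) [Fintype A] (R₀ : AddSubgroup (A → ℤ))
    (hdeg : ∀ f ∈ R₀, ∑ a, f a = 0) :
    (∀ f : A → ℤ, (GenSemiring (R₀ : Set (A → ℤ)) (↑f) ∧ ∑ a, f a = 0) ↔ f ∈ R₀) ∧
    (∀ x : WithBot (A → ℤ), GenSemiring (R₀ : Set (A → ℤ)) x →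
      ((∃ y : WithBot (A → ℤ), GenSemiring (R₀ : Set (A → ℤ)) y ∧
          x + y = (↑(0 : A → ℤ)) ∧ y + x = (↑(0 : A → ℤ))) ↔
        ∃ f ∈ R₀, x = ↑f)) := by
  -- key: if f ≥ g pointwise, g ∈ R₀, ∑ f = 0 then f = g
  have key : ∀ f g : A → ℤ, g ∈ R₀ → g ≤ f → ∑ a, f a = 0 → f = g := by
    intro f g hg hle hsum
    have h0 : ∑ a, (f a - g a) = 0 := by
      rw [Finset.sum_sub_distrib, hsum, hdeg g hg, sub_zero]
    have := (Finset.sum_eq_zero_iff_of_nonneg (fun a _ => sub_nonneg.mpr (hle a))).mp h0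
    funext a
    have := this a (Finset.mem_univ a)
    omega
  have part1 : ∀ f : A → ℤ,
      (GenSemiring (R₀ : Set (A → ℤ)) (↑f) ∧ ∑ a, f a = 0) ↔ f ∈ R₀ := by
    intro f
    constructor
    · rintro ⟨hgen, hsum⟩
      rcases gen_struct R₀ _ hgen with h | ⟨f', g, hf, hg, hle⟩
      · exact absurd h (WithBot.coe_ne_bot)
      · obtain rfl : f = f' := WithBot.coe_injective hf
        rw [key f g hg hle hsum]; exact hg
    · intro hf
      exact ⟨GenSemiring.of f hf, hdeg f hf⟩
  refine ⟨part1, fun x hx => ?_⟩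
  constructor
  · rintro ⟨y, hy, hxy, -⟩
    rcases gen_struct R₀ _ hx with rfl | ⟨f, g, rfl, hg, hle⟩
    · simp at hxy
    rcases gen_struct R₀ _ hy with rfl | ⟨f', g', rfl, hg', hle'⟩
    · simp at hxy
    rw [← WithBot.coe_add] at hxy
    have hff' : f + f' = 0 := WithBot.coe_injective hxy
    have hsg : ∑ a, g a = 0 := hdeg g hg
    have hsg' : ∑ a, g' a = 0 := hdeg g' hg'
    have h1 : (0:ℤ) ≤ ∑ a, f a := by
      rw [← hsg]; exact Finset.sum_le_sum (fun a _ => hle a)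
    have h2 : (0:ℤ) ≤ ∑ a, f' a := by
      rw [← hsg']; exact Finset.sum_le_sum (fun a _ => hle' a)
    have h3 : ∑ a, f a + ∑ a, f' a = 0 := by
      rw [← Finset.sum_add_distrib]
      simp [show ∀ a, f a + f' a = 0 from fun a => congrFun hff' a]
    have hsf : ∑ a, f a = 0 := by omega
    refine ⟨f, ?_, rfl⟩
    rw [key f g hg hle hsf]; exact hg
  · rintro ⟨f, hf, rfl⟩
    refine ⟨↑(-f), GenSemiring.of (-f) (neg_mem hf), ?_, ?_⟩ <;>
      rw [← WithBot.coe_add] <;> simp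
end

section
/- Let X be a 1-dimensional tropical fan in ℝⁿ. Define the weighted evaluation map φ_X sending a Boolean Laurent polynomial function f to the function X(1) → ℤ, ρ ↦ w_ρ·f(d_ρ). Then φ_X is a semiring homomorphism from the Boolean Laurent polynomial function semiring to ℤ_pos^{X(1)}, and its kernel congruence is exactly {(f,g) : f and g agree on the support |X|}. -/
open Pointwise

noncomputable def boolFnR {n : ℕ} (S : Finset (Fin n → ℤ)) (hS : S.Nonempty)
    (x : Fin n → ℝ) : ℝ :=
  S.sup' hS fun u => ∑ i, (u i : ℝ) * x i

def boolFnZ {n : ℕ} (S : Finset (Fin n → ℤ)) (hS : S.Nonempty)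
    (v : Fin n → ℤ) : ℤ :=
  S.sup' hS fun u => ∑ i, u i * v i

lemma boolFnR_cast {n : ℕ} (S : Finset (Fin n → ℤ)) (hS : S.Nonempty)
    (v : Fin n → ℤ) :
    boolFnR S hS (fun i => (v i : ℝ)) = (boolFnZ S hS v : ℝ) := by
  have h := Finset.comp_sup'_eq_sup'_comp hS (f := fun u => ∑ i, u i * v i)
    (g := (Int.cast : ℤ → ℝ)) (fun a b => by simp)
  rw [boolFnR, boolFnZ, h]
  refine Finset.sup'_congr hS rfl fun u _ => ?_
  simp [Function.comp]

lemma boolFnR_smul {n : ℕ} (S : Finset (Fin n → ℤ)) (hS : S.Nonempty)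
    (t : ℝ) (ht : 0 ≤ t) (x : Fin n → ℝ) :
    boolFnR S hS (t • x) = t * boolFnR S hS x := by
  have h := Finset.comp_sup'_eq_sup'_comp hS (f := fun u => ∑ i, (u i : ℝ) * x i)
    (g := fun r => t * r) (fun a b => mul_max_of_nonneg a b ht)
  rw [boolFnR, boolFnR]
  have e : (fun (u : Fin n → ℤ) => ∑ i, (u i : ℝ) * (t • x) i)
      = (fun r => t * r) ∘ (fun (u : Fin n → ℤ) => ∑ i, (u i : ℝ) * x i) := by
    funext u
    simp only [Function.comp_apply, Pi.smul_apply, smul_eq_mul, Finset.mul_sum]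
    exact Finset.sum_congr rfl fun i _ => by ring
  rw [e, ← h]

lemma boolFnZ_le {n : ℕ} (S : Finset (Fin n → ℤ)) (hS : S.Nonempty)
    (v : Fin n → ℤ) {u : Fin n → ℤ} (hu : u ∈ S) :
    ∑ i, u i * v i ≤ boolFnZ S hS v := by
  simp only [boolFnZ]
  apply Finset.le_sup' (f := fun u => ∑ i, u i * v i) hu

lemma boolFnZ_add {n : ℕ} (S T : Finset (Fin n → ℤ)) (hS : S.Nonempty)
    (hT : T.Nonempty) (v : Fin n → ℤ) :
    boolFnZ (S + T) (hS.add hT) v = boolFnZ S hS v + boolFnZ T hT v := by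
  apply le_antisymm
  · apply Finset.sup'_le
    intro u hu
    rw [Finset.mem_add] at hu
    obtain ⟨s, hs, t, ht, rfl⟩ := hu
    have : ∑ i, (s + t) i * v i = ∑ i, s i * v i + ∑ i, t i * v i := by
      rw [← Finset.sum_add_distrib]; congr 1; ext i; simp [add_mul]
    rw [this]
    exact add_le_add (boolFnZ_le S hS v hs) (boolFnZ_le T hT v ht)
  · obtain ⟨s, hs, hseq⟩ := Finset.exists_mem_eq_sup' hS (fun u => ∑ i, u i * v i)
    obtain ⟨t, ht, hteq⟩ := Finset.exists_mem_eq_sup' hT (fun u => ∑ i, u i * v i)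
    rw [boolFnZ, boolFnZ, hseq, hteq]
    have hmem : s + t ∈ S + T := Finset.add_mem_add hs ht
    calc ∑ i, s i * v i + ∑ i, t i * v i = ∑ i, (s + t) i * v i := by
          rw [← Finset.sum_add_distrib]; congr 1; ext i; simp [add_mul]
      _ ≤ boolFnZ (S + T) (hS.add hT) v := boolFnZ_le _ _ v hmem

/-- Let `X` be a 1-dimensional tropical fan in `ℝⁿ` with rays
indexed by `ι`, positive weights `w`, primitive directions `d`, and balancing
condition.  The weighted evaluation map `φ_X : f ↦ (ρ ↦ w ρ * f (d ρ))` is a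
semiring homomorphism from Boolean Laurent polynomial functions (represented
by their supports: `⊕` ↦ union of supports, `⊙` ↦ Minkowski sum of supports)
into `ℤ_pos^{X(1)}` (pointwise max / pointwise sum, total degree ≥ 0), and its
kernel is exactly the relation "agreeing on the support `|X|` of the fan". -/
theorem weighted_evaluation_hom_ker (n : ℕ) (ι : Type*) [Fintype ι]
    (w : ι → ℤ) (hw : ∀ ρ, 0 < w ρ)
    (d : ι → Fin n → ℤ)
    (hprim : ∀ ρ, Finset.univ.gcd (d ρ) = 1)
    (hbal : ∑ ρ, w ρ • d ρ = 0) :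
    (∀ (S : Finset (Fin n → ℤ)) (hS : S.Nonempty),
      0 ≤ ∑ ρ, w ρ * boolFnZ S hS (d ρ)) ∧
    (∀ (S T : Finset (Fin n → ℤ)) (hS : S.Nonempty) (hT : T.Nonempty) (ρ : ι),
      w ρ * boolFnZ (S ∪ T) (hS.mono Finset.subset_union_left) (d ρ) =
        max (w ρ * boolFnZ S hS (d ρ)) (w ρ * boolFnZ T hT (d ρ))) ∧
    (∀ (S T : Finset (Fin n → ℤ)) (hS : S.Nonempty) (hT : T.Nonempty) (ρ : ι),
      w ρ * boolFnZ (S + T) (hS.add hT) (d ρ) =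
        w ρ * boolFnZ S hS (d ρ) + w ρ * boolFnZ T hT (d ρ)) ∧
    (∀ (S T : Finset (Fin n → ℤ)) (hS : S.Nonempty) (hT : T.Nonempty),
      (∀ ρ, w ρ * boolFnZ S hS (d ρ) = w ρ * boolFnZ T hT (d ρ)) ↔
        ∀ x : Fin n → ℝ,
          (∃ (ρ : ι) (t : ℝ), 0 ≤ t ∧ x = t • fun i => (d ρ i : ℝ)) →
          boolFnR S hS x = boolFnR T hT x) := by
  have hbal' : ∀ i, ∑ ρ, w ρ * d ρ i = 0 := by
    intro i
    have := congrFun hbal i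
    simpa [Finset.sum_apply] using this
  refine ⟨?_, ?_, ?_, ?_⟩
  · intro S hS
    obtain ⟨u, hu⟩ := hS
    have h1 : ∀ ρ, w ρ * (∑ i, u i * d ρ i) ≤ w ρ * boolFnZ S ⟨u, hu⟩ (d ρ) :=
      fun ρ => mul_le_mul_of_nonneg_left (boolFnZ_le S ⟨u, hu⟩ (d ρ) hu) (hw ρ).le
    calc (0 : ℤ) = ∑ ρ, w ρ * ∑ i, u i * d ρ i := by
          rw [eq_comm]
          calc ∑ ρ, w ρ * ∑ i, u i * d ρ i
              = ∑ ρ, ∑ i, u i * (w ρ * d ρ i) := by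
                refine Finset.sum_congr rfl fun ρ _ => ?_
                rw [Finset.mul_sum]
                exact Finset.sum_congr rfl fun i _ => by ring
            _ = ∑ i, ∑ ρ, u i * (w ρ * d ρ i) := Finset.sum_comm
            _ = ∑ i, u i * ∑ ρ, w ρ * d ρ i := by
                refine Finset.sum_congr rfl fun i _ => ?_
                rw [Finset.mul_sum]
            _ = 0 := by simp [hbal']
      _ ≤ ∑ ρ, w ρ * boolFnZ S ⟨u, hu⟩ (d ρ) := Finset.sum_le_sum fun ρ _ => h1 ρ
  · intro S T hS hT ρ
    rw [boolFnZ, Finset.sup'_union hS hT, ← mul_max_of_nonneg _ _ (hw ρ).le]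
    rfl
  · intro S T hS hT ρ
    rw [boolFnZ_add S T hS hT, mul_add]
  · intro S T hS hT
    constructor
    · intro h x hx
      obtain ⟨ρ, t, ht, rfl⟩ := hx
      have hz : boolFnZ S hS (d ρ) = boolFnZ T hT (d ρ) :=
        mul_left_cancel₀ (hw ρ).ne' (h ρ)
      rw [boolFnR_smul S hS t ht, boolFnR_smul T hT t ht,
        boolFnR_cast, boolFnR_cast, hz]
    · intro h ρ
      have := h (fun i => (d ρ i : ℝ)) ⟨ρ, 1, zero_le_one, by funext i; simp⟩
      rw [boolFnR_cast, boolFnR_cast] at this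
      have hz : boolFnZ S hS (d ρ) = boolFnZ T hT (d ρ) := by exact_mod_cast this
      rw [hz]
end

section
/- For the standard 1-dimensional tropical fan L_{n,r} in ℝⁿ (2 ≤ r ≤ n+1) whose rays are spanned by e_1, ..., e_{r-1} and e_0 = -(e_1 + ⋯ + e_{r-1}), all with weight 1, the weighted evaluation map φ_{L_{n,r}} from Boolean Laurent polynomial functions on ℝⁿ to ℤ_pos^{L_{n,r}(1)} is surjective. -/
/-- For the standard fan `L_{n,r}` in `ℝⁿ` (`2 ≤ r ≤ n+1`),
with rays `ρ_0` spanned by `e_0 = -(e_1 + ⋯ + e_{r-1})` and `ρ_j` spanned by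
`e_j` for `j = 1, …, r-1`, all with weight `1`, the weighted evaluation map is
surjective: every integer-valued function `F` on the rays with `∑ F ≥ 0` is
`ρ_j ↦ f(d_{ρ_j})` for some Boolean Laurent polynomial function `f`. -/
theorem standard_fan_evaluation_surjective (n r : ℕ) (h2 : 2 ≤ r) (hrn : r ≤ n + 1)
    (d : Fin r → Fin n → ℤ)
    (hd0 : ∀ i : Fin n, d ⟨0, by omega⟩ i = if (i : ℕ) < r - 1 then -1 else 0)
    (hdj : ∀ j : Fin r, 0 < (j : ℕ) →
      ∀ i : Fin n, d j i = if (i : ℕ) + 1 = (j : ℕ) then 1 else 0) :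
    ∀ F : Fin r → ℤ, 0 ≤ ∑ j, F j →
      ∃ (S : Finset (Fin n → ℤ)) (hS : S.Nonempty),
        ∀ j, S.sup' hS (fun u => ∑ i, u i * d j i) = F j := by
  intro F hF
  have hn1 : r - 1 ≤ n := by omega
  have hn0 : 0 < n := by omega
  set T : ℤ := ∑ j, F j with hT
  set b : ℕ → ℤ := fun k => F ⟨min k (r-1), by omega⟩ with hb
  have hbF : ∀ j : Fin r, b (j : ℕ) = F j := by
    intro j
    simp only [hb]
    congr 1
    exact Fin.ext (by simp [Fin.val_mk]; omega)
  have hTb : T = (∑ k ∈ Finset.range (r-1), b (k+1)) + b 0 := by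
    have h1 : ∑ j : Fin r, F j = ∑ k ∈ Finset.range r, b k := by
      rw [← Fin.sum_univ_eq_sum_range b r]
      exact Finset.sum_congr rfl (fun j _ => (hbF j).symm)
    have h2'' := Finset.sum_range_succ' b (r-1)
    rw [show r - 1 + 1 = r by omega] at h2''
    rw [hT, h1, h2'']
  set u : Fin n → ℤ := fun i => if (i:ℕ) < r - 1 then b ((i:ℕ)+1) else 0 with hu
  obtain ⟨z, hz⟩ : ∃ z : Fin n, (z : ℕ) = 0 := ⟨⟨0, hn0⟩, rfl⟩
  have key : ∀ (t : ℤ) (j : Fin r),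
      (∑ i, (u i - (if (i:ℕ) = 0 then t else 0)) * d j i)
        = if (j:ℕ) = 0 then F j - T + t else F j - (if (j:ℕ) = 1 then t else 0) := by
    intro t j
    rcases Nat.eq_zero_or_pos (j:ℕ) with hj | hj
    · have hj0 : j = ⟨0, by omega⟩ := Fin.ext hj
      have hdd : ∀ i : Fin n, d j i = if (i : ℕ) < r - 1 then -1 else 0 := by
        rw [hj0]; exact hd0
      simp only [hdd]
      have step : ∀ i : Fin n,
          (u i - (if (i:ℕ) = 0 then t else 0)) * (if (i:ℕ) < r - 1 then (-1:ℤ) else 0)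
            = (if (i:ℕ) < r - 1 then -(b ((i:ℕ)+1)) else 0)
              + (if i = z then t else 0) := by
        intro i
        simp only [hu, Fin.ext_iff, hz]
        split_ifs <;> try ring
        all_goals (exfalso; omega)
      rw [Finset.sum_congr rfl (fun i _ => step i), Finset.sum_add_distrib,
        Finset.sum_ite_eq' Finset.univ z (fun _ => t)]
      simp only [Finset.mem_univ, if_true]
      have hsum : (∑ i : Fin n, (if (i:ℕ) < r - 1 then -(b ((i:ℕ)+1)) else 0))
          = -(∑ k ∈ Finset.range (r-1), b (k+1)) := by
        rw [Fin.sum_univ_eq_sum_range (fun k => if k < r - 1 then -(b (k+1)) else 0) n]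
        rw [← Finset.sum_subset (Finset.range_subset_range.2 hn1)
          (fun x _ hx => by rw [if_neg (by simpa using hx)])]
        rw [← Finset.sum_neg_distrib]
        exact Finset.sum_congr rfl (fun x hx => by rw [if_pos (Finset.mem_range.1 hx)])
      rw [hsum, if_pos hj, hTb, ← hbF j, hj]
      ring
    · simp only [hdj j hj]
      obtain ⟨i0, hi0⟩ : ∃ i0 : Fin n, (i0 : ℕ) = (j:ℕ) - 1 := ⟨⟨(j:ℕ)-1, by omega⟩, rfl⟩
      have hiff : ∀ i : Fin n, ((i:ℕ) + 1 = (j:ℕ)) ↔ i = i0 := by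
        intro i
        rw [Fin.ext_iff, hi0]
        omega
      have step : ∀ i : Fin n,
          (u i - (if (i:ℕ) = 0 then t else 0)) * (if (i:ℕ) + 1 = (j:ℕ) then (1:ℤ) else 0)
            = if i = i0 then u i - (if (i:ℕ) = 0 then t else 0) else 0 := by
        intro i
        rw [if_congr (hiff i) rfl rfl]
        split_ifs <;> ring
      rw [Finset.sum_congr rfl (fun i _ => step i),
        Finset.sum_ite_eq' Finset.univ i0 _]
      simp only [Finset.mem_univ, if_true, hu, hi0]
      rw [if_neg (show ¬((j:ℕ) = 0) by omega)]
      rw [if_pos (show (j:ℕ)-1 < r-1 by omega), show (j:ℕ)-1+1 = (j:ℕ) by omega, hbF j]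
      congr 1
      by_cases hc : (j:ℕ) = 1
      · rw [if_pos (by omega), if_pos hc]
      · rw [if_neg (by omega), if_neg hc]
  set v : Fin n → ℤ := fun i => u i - (if (i:ℕ) = 0 then T else 0) with hv
  refine ⟨{u, v}, Finset.insert_nonempty _ _, ?_⟩
  intro j
  have h0 : (∑ i, u i * d j i)
      = if (j:ℕ) = 0 then F j - T + 0 else F j - (if (j:ℕ) = 1 then 0 else 0) := by
    have := key 0 j
    simpa using this
  have hv' : (∑ i, v i * d j i)
      = if (j:ℕ) = 0 then F j - T + T else F j - (if (j:ℕ) = 1 then T else 0) :=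
    key T j
  apply le_antisymm
  · rw [Finset.sup'_le_iff]
    intro x hx
    rcases Finset.mem_insert.1 hx with rfl | hx
    · rw [h0]; split_ifs <;> omega
    · rw [Finset.mem_singleton.1 hx, hv']; split_ifs <;> omega
  · by_cases hj : (j:ℕ) = 0
    · refine le_trans ?_ (Finset.le_sup' _ (show v ∈ ({u, v} : Finset (Fin n → ℤ)) by simp))
      rw [hv', if_pos hj]; omega
    · refine le_trans ?_ (Finset.le_sup' _ (show u ∈ ({u, v} : Finset (Fin n → ℤ)) by simp))
      rw [h0, if_neg hj]; split_ifs <;> omega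
end

section
/- Let Y be the 1-dimensional tropical fan in ℝ² with rays spanned by (1,2), (3,1), (-4,-3), each of weight 1. Then the weighted evaluation map φ_Y from Boolean Laurent polynomial functions on ℝ² to ℤ_pos^{Y(1)} is not surjective. -/
/-- For the 1-dimensional tropical fan `Y` in `ℝ²` with rays
spanned by `(1,2)`, `(3,1)`, `(-4,-3)`, all of weight `1`, the weighted
evaluation map is not surjective onto `ℤ_pos^{Y(1)}`. -/
theorem Y_fan_evaluation_not_surjective (d : Fin 3 → Fin 2 → ℤ)
    (hd : d = ![![1, 2], ![3, 1], ![-4, -3]]) :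
    ¬ ∀ F : Fin 3 → ℤ, 0 ≤ ∑ j, F j →
        ∃ (S : Finset (Fin 2 → ℤ)) (hS : S.Nonempty),
          ∀ j, S.sup' hS (fun u => ∑ i, u i * d j i) = F j := by
  subst hd
  intro h
  obtain ⟨S, hS, hsup⟩ := h ![1, 0, -1] (by decide)
  obtain ⟨u, hu⟩ := hS
  have h0 : u 0 * 1 + u 1 * 2 ≤ 1 := by
    have := (Finset.le_sup' (fun u : Fin 2 → ℤ => ∑ i, u i * ![![1,2],![3,1],![-4,-3]] 0 i) hu).trans_eq (hsup 0)
    simpa [Fin.sum_univ_two] using this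
  have h1 : u 0 * 3 + u 1 * 1 ≤ 0 := by
    have := (Finset.le_sup' (fun u : Fin 2 → ℤ => ∑ i, u i * ![![1,2],![3,1],![-4,-3]] 1 i) hu).trans_eq (hsup 1)
    simpa [Fin.sum_univ_two] using this
  have h2 : u 0 * (-4) + u 1 * (-3) ≤ -1 := by
    have := (Finset.le_sup' (fun u : Fin 2 → ℤ => ∑ i, u i * ![![1,2],![3,1],![-4,-3]] 2 i) hu).trans_eq (hsup 2)
    simpa [Fin.sum_univ_two] using this
  omega
end

section
/- Let A = {a_0, a_1, ..., a_n} be a finite set with n ≥ 1, and let B be any finite set. Then every semiring homomorphism ν from ℤ_pos^A to ℤ_pos^B is geometric with respect to the generators F_1, ..., F_n of ℤ₀^A, where F_i(a_i) = -1, F_i(a_0) = 1, and F_i = 0 elsewhere: i.e., for every b ∈ B there exist a_j ∈ A and a rational t ≥ 0 such that (ν(F_1)(b), ..., ν(F_n)(b)) = t·(F_1(a_j), ..., F_n(a_j)). -/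
/-- The degree of `F : A → ℤ`. -/
def degSum {A : Type*} [Fintype A] (F : A → ℤ) : ℤ := ∑ a, F a

/-- The semiring `ℤ_pos^A`: integer-valued functions on `A` of nonnegative
degree, together with `-∞` (modelled by `none`). -/
abbrev Zpos (A : Type*) [Fintype A] := Option {F : A → ℤ // 0 ≤ degSum F}

/-- Addition on `ℤ_pos^A`: pointwise max, with `-∞` as identity. -/
def Zpos.add {A : Type*} [Fintype A] : Zpos A → Zpos A → Zpos A
  | none, x => x
  | x, none => x
  | some F, some G =>
      some ⟨fun a => max (F.1 a) (G.1 a),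
        le_trans F.2 (Finset.sum_le_sum fun a _ => le_max_left _ _)⟩

/-- Multiplication on `ℤ_pos^A`: pointwise sum, with `-∞` absorbing. -/
def Zpos.mul {A : Type*} [Fintype A] : Zpos A → Zpos A → Zpos A
  | none, _ => none
  | _, none => none
  | some F, some G =>
      some ⟨fun a => F.1 a + G.1 a, by
        have h : degSum (fun a => F.1 a + G.1 a) = degSum F.1 + degSum G.1 := by
          simp [degSum, Finset.sum_add_distrib]
        rw [h]; exact add_nonneg F.2 G.2⟩

/-- The multiplicative identity of `ℤ_pos^A`: the zero function. -/
def Zpos.one {A : Type*} [Fintype A] : Zpos A :=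
  some ⟨fun _ => 0, by simp [degSum]⟩

/-- The generator `F_i` of `ℤ₀^{A}` for `A = {a_0, …, a_n}`:
`F_i(a_i) = -1`, `F_i(a_0) = 1`, `F_i = 0` elsewhere. -/
def FelFun (n : ℕ) (i : Fin n) : Fin (n + 1) → ℤ :=
  fun a => if a = i.succ then -1 else if a = 0 then 1 else 0

theorem FelFun_deg (n : ℕ) (i : Fin n) : degSum (FelFun n i) = 0 := by
  classical
  have hne : (i.succ : Fin (n + 1)) ≠ 0 := Fin.succ_ne_zero i
  have hpt : ∀ a : Fin (n + 1), FelFun n i a =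
      (if a = i.succ then (-1 : ℤ) else 0) + (if a = 0 then 1 else 0) := by
    intro a
    by_cases h1 : a = i.succ
    · subst h1; simp [FelFun, hne]
    · by_cases h2 : a = 0
      · subst h2; simp [FelFun, h1, Ne.symm hne]
      · simp [FelFun, h1, h2]
  simp only [degSum, hpt, Finset.sum_add_distrib]
  rw [Finset.sum_ite_eq' Finset.univ, Finset.sum_ite_eq' Finset.univ]
  simp

/-- The generator `F_i` as an element of `ℤ_pos^{Fin (n+1)}`. -/
def Fel (n : ℕ) (i : Fin n) : Zpos (Fin (n + 1)) :=
  some ⟨FelFun n i, le_of_eq (FelFun_deg n i).symm⟩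

/-!
Write `E_a := δ_{a₀} - δ_a`, so that `E_{a₀} = 1` and `E_{a_i} = F_i`. Each `E_a` has degree zero,
hence is a unit, so `ν (E_a)` is a genuine function. For `a ≠ a'` the tropical sum `E_a ⊕ E_{a'}` is
`δ_{a₀}`, so at each `b ∈ B` the numbers `y_a := ν(E_a)(b)` satisfy `max (y_a, y_{a'}) = c` with
`y_{a₀} = 0`. By the tropical equations all of them but one, `y_j ≤ c`, are equal to `c`, and this says
exactly that `(ν(F_i)(b))_i = (c - y_j) • (F_i(a_j))_i`.
-/
theorem exists_le_forall_ne_eq_of_pairwise_max_eq {ι α : Type*} [Nontrivial ι] [LinearOrder α]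
    {y : ι → α} {c : α} (h : Pairwise fun i j => max (y i) (y j) = c) :
    ∃ j, y j ≤ c ∧ ∀ i, i ≠ j → y i = c := by
  have hle : ∀ i, y i ≤ c := fun i => by
    obtain ⟨j, hj⟩ := exists_ne i
    exact h hj.symm ▸ le_max_left _ _
  by_cases hlt : ∃ j, y j < c
  · obtain ⟨j, hj⟩ := hlt
    exact ⟨j, hj.le, fun i hij =>
      (hle i).eq_or_lt.resolve_right fun hi => (max_lt hi hj).ne (h hij)⟩
  · simp only [not_exists, not_lt] at hlt
    obtain ⟨j⟩ := (inferInstance : Nonempty ι)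
    exact ⟨j, hle j, fun i _ => le_antisymm (hle i) (hlt i)⟩

theorem eq_mul_single_sub_single_of_forall_ne_eq {A R : Type*} [DecidableEq A] [CommRing R]
    {y : A → R} {a₀ j : A} {c : R} (h₀ : y a₀ = 0) (hne : ∀ a, a ≠ j → y a = c) (a : A) :
    y a = (c - y j) * ((Pi.single a₀ 1 : A → R) j - (Pi.single a 1 : A → R) j) := by
  by_cases ha : a = a₀
  · subst ha; simp [h₀]
  by_cases hj : j = a₀
  · subst hj
    simp [h₀, ha, hne a ha]
  · have hc : c = 0 := (hne a₀ (Ne.symm hj)).symm.trans h₀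
    by_cases haj : a = j
    · subst haj; simp [hc, hj]
    · simp [hc, hne a haj, hj, Ne.symm haj]

namespace Zpos

variable {A B : Type*} [Fintype A] [Fintype B]

theorem val_apply_eq_zero_of_some_eq_one {F : {F : A → ℤ // 0 ≤ degSum F}}
    (h : some F = (Zpos.one : Zpos A)) (a : A) : F.1 a = 0 := by
  cases h; rfl

theorem exists_map_eq_some_of_degSum_eq_zero {ν : Zpos A → Zpos B}
    (hone : ν Zpos.one = Zpos.one) (hmul : ∀ x y, ν (Zpos.mul x y) = Zpos.mul (ν x) (ν y))
    {F : A → ℤ} (hF : degSum F = 0) : ∃ G, ν (some ⟨F, hF.ge⟩) = some G := by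
  have hinv : 0 ≤ degSum (-F) := by
    simp only [degSum] at hF ⊢
    simp [Finset.sum_neg_distrib, hF]
  have hunit : Zpos.mul (some ⟨F, hF.ge⟩) (some ⟨-F, hinv⟩) = Zpos.one := by
    simp only [Zpos.mul, Zpos.one, Pi.neg_apply, add_neg_cancel]
  cases hν : ν (some ⟨F, hF.ge⟩) with
  | some G => exact ⟨G, rfl⟩
  | none =>
    have := hmul (some ⟨F, hF.ge⟩) (some ⟨-F, hinv⟩)
    rw [hunit, hone, hν] at this
    cases this

theorem exists_pairwise_max_eq_of_pairwise_add_eq {ι : Type*} [Nontrivial ι]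
    {ν : Zpos A → Zpos B} (hadd : ∀ x y, ν (Zpos.add x y) = Zpos.add (ν x) (ν y))
    {e : ι → Zpos A} {s : Zpos A} (he : Pairwise fun i j => Zpos.add (e i) (e j) = s)
    {G : ι → {F : B → ℤ // 0 ≤ degSum F}} (hG : ∀ i, ν (e i) = some (G i)) :
    ∃ c : B → ℤ, ∀ b, Pairwise fun i j => max ((G i).1 b) ((G j).1 b) = c b := by
  have hs : ∀ i j, i ≠ j →
      ν s = some ⟨fun b => max ((G i).1 b) ((G j).1 b),
        le_trans (G i).2 (Finset.sum_le_sum fun b _ => le_max_left _ _)⟩ := by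
    intro i j hij
    rw [← he hij, hadd, hG, hG]
    rfl
  obtain ⟨i, j, hij⟩ := exists_pair_ne ι
  refine ⟨fun b => max ((G i).1 b) ((G j).1 b), fun b k l hkl => ?_⟩
  have := Option.some.inj ((hs k l hkl).symm.trans (hs i j hij))
  exact congrFun (congrArg Subtype.val this) b

variable [DecidableEq A]

theorem degSum_single_sub_single (a₀ a : A) :
    degSum (Pi.single a₀ 1 - Pi.single a 1 : A → ℤ) = 0 := by
  simp [degSum, Finset.sum_sub_distrib]

def single (a₀ : A) : Zpos A :=
  some ⟨Pi.single a₀ 1, by simp [degSum]⟩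

def diffSingle (a₀ a : A) : Zpos A :=
  some ⟨Pi.single a₀ 1 - Pi.single a 1, (degSum_single_sub_single a₀ a).ge⟩

theorem diffSingle_self (a₀ : A) : diffSingle a₀ a₀ = Zpos.one := by
  simp only [diffSingle, Zpos.one, sub_self]
  rfl

theorem add_diffSingle_of_ne (a₀ : A) {a a' : A} (h : a ≠ a') :
    Zpos.add (diffSingle a₀ a) (diffSingle a₀ a') = single a₀ := by
  simp only [Zpos.add, diffSingle, single, Option.some.injEq, Subtype.mk.injEq]
  funext x
  simp only [Pi.sub_apply, Pi.single_apply]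
  split_ifs <;> grind

end Zpos

theorem FelFun_eq_single_sub_single (n : ℕ) (i : Fin n) :
    FelFun n i = Pi.single 0 1 - Pi.single i.succ 1 := by
  funext a
  simp only [FelFun, Pi.sub_apply, Pi.single_apply]
  split_ifs <;> grind [Fin.succ_ne_zero]

theorem Fel_eq_diffSingle (n : ℕ) (i : Fin n) : Fel n i = Zpos.diffSingle 0 i.succ := by
  simp only [Fel, Zpos.diffSingle, FelFun_eq_single_sub_single]

theorem hom_Zpos_geometric_general (n : ℕ) (hn : 1 ≤ n) (B : Type*) [Fintype B]
    (ν : Zpos (Fin (n + 1)) → Zpos B)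
    (hone : ν Zpos.one = Zpos.one)
    (haddν : ∀ x y, ν (Zpos.add x y) = Zpos.add (ν x) (ν y))
    (hmulν : ∀ x y, ν (Zpos.mul x y) = Zpos.mul (ν x) (ν y)) :
    ∀ b : B, ∃ (j : Fin (n + 1)) (t : ℚ), 0 ≤ t ∧
      ∀ i : Fin n, ∃ Gi : {F : B → ℤ // 0 ≤ degSum F},
        ν (Fel n i) = some Gi ∧ (Gi.1 b : ℚ) = t * (FelFun n i j : ℚ) := by
  have : Nontrivial (Fin (n + 1)) := Fin.nontrivial_iff_two_le.mpr (by omega)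
  choose G hG using (fun a => Zpos.exists_map_eq_some_of_degSum_eq_zero hone hmulν
    (Zpos.degSum_single_sub_single 0 a) : ∀ a, ∃ G, ν (Zpos.diffSingle 0 a) = some G)
  obtain ⟨c, hc⟩ := Zpos.exists_pairwise_max_eq_of_pairwise_add_eq haddν
    (fun _ _ h => Zpos.add_diffSingle_of_ne 0 h) hG
  intro b
  have h₀ : (G 0).1 b = 0 := Zpos.val_apply_eq_zero_of_some_eq_one
    (by rw [← hone, ← Zpos.diffSingle_self 0]; exact (hG 0).symm) b
  obtain ⟨j, hj, hne⟩ := exists_le_forall_ne_eq_of_pairwise_max_eq (hc b)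
  refine ⟨j, ((c b - (G j).1 b : ℤ) : ℚ), by exact_mod_cast sub_nonneg.mpr hj,
    fun i => ⟨G i.succ, by rw [Fel_eq_diffSingle]; exact hG _, ?_⟩⟩
  rw [FelFun_eq_single_sub_single]
  exact_mod_cast eq_mul_single_sub_single_of_forall_ne_eq (y := fun a => (G a).1 b) h₀ hne i.succ

/-- Every semiring homomorphism
`ν : ℤ_pos^{A} → ℤ_pos^{B}` with `A = {a_0, a_1, …, a_n}`, `n ≥ 1`, is
geometric with respect to the generators `F_1, …, F_n`: for every `b ∈ B`
there exist `a_j ∈ A` and a rational `t ≥ 0` such that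
`(ν F_1)(b), …, (ν F_n)(b)) = t • (F_1(a_j), …, F_n(a_j))`. -/
theorem hom_Zpos_geometric (n : ℕ) (hn : 1 ≤ n) (B : Type*) [Fintype B]
    (ν : Zpos (Fin (n + 1)) → Zpos B)
    (hzero : ν none = none)
    (hone : ν Zpos.one = Zpos.one)
    (haddν : ∀ x y, ν (Zpos.add x y) = Zpos.add (ν x) (ν y))
    (hmulν : ∀ x y, ν (Zpos.mul x y) = Zpos.mul (ν x) (ν y)) :
    ∀ b : B, ∃ (j : Fin (n + 1)) (t : ℚ), 0 ≤ t ∧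
      ∀ i : Fin n, ∃ Gi : {F : B → ℤ // 0 ≤ degSum F},
        ν (Fel n i) = some Gi ∧ (Gi.1 b : ℚ) = t * (FelFun n i j : ℚ) :=
  hom_Zpos_geometric_general n hn B ν hone haddν hmulν
end

section
/- Let m ≥ n be positive integers, and let A be an m × n integer matrix such that there exists an n × m integer matrix B with BA = Eₙ (the n × n identity). Then there exists a matrix A' ∈ GL(m, ℤ) whose first n columns coincide with the columns of A. -/
/-! The retraction `B` splits `ℤᵐ ≅ ℤⁿ ⊕ ker B` with `ℤⁿ` embedded by `A`, and `ker B` is free,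
being a submodule of a free module over a PID. The standard basis of `ℤⁿ`, pushed forward by
`A`, together with a basis of `ker B` is therefore a basis of `ℤᵐ`; its coordinate matrix
is invertible and has the columns of `A` among its columns. -/

universe u

open LinearMap

section Retraction

variable {R N : Type*} {M : Type u} [Ring R] [AddCommGroup M] [AddCommGroup N]
  [Module R M] [Module R N]

theorem LinearMap.bijective_subtype_ker_coprod_of_comp_eq_id {f : N →ₗ[R] M} {g : M →ₗ[R] N}
    (hgf : g ∘ₗ f = LinearMap.id) : Function.Bijective ((ker g).subtype.coprod f) := by
  have hgf' (y : N) : g (f y) = y := congr($hgf y)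
  refine ⟨(injective_iff_map_eq_zero _).2 fun ⟨k, y⟩ h => ?_,
    fun x => ⟨(⟨x - f (g x), ?_⟩, g x), ?_⟩⟩
  · have hy : y = 0 := by simpa [hgf', k.2] using congr(g $h)
    simp_all
  · simp [hgf']
  · simp

theorem Module.Basis.exists_basis_sum_inl_eq_of_comp_eq_id {ι : Type*} {f : N →ₗ[R] M}
    {g : M →ₗ[R] N} [Module.Free R (ker g)]
    (hgf : g ∘ₗ f = LinearMap.id) (bN : Basis ι R N) :
    ∃ (κ : Type u) (b : Basis (ι ⊕ κ) R M), ∀ i, b (.inl i) = f (bN i) :=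
  ⟨_, (bN.prod (Free.chooseBasis R (ker g))).map (LinearEquiv.prodComm R N (ker g) ≪≫ₗ
    .ofBijective _ (bijective_subtype_ker_coprod_of_comp_eq_id hgf)), fun i => by simp⟩

end Retraction

theorem exists_sumEquiv_fin_inl_eq_castLE {m n : ℕ} (hmn : n ≤ m) {κ : Type*}
    (e : Fin n ⊕ κ ≃ Fin m) : ∃ e' : Fin n ⊕ κ ≃ Fin m, ∀ j, e' (.inl j) = Fin.castLE hmn j := by
  have : Finite κ := Finite.of_injective (e ∘ Sum.inr) (e.injective.comp Sum.inr_injective)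
  have hκ : n + Nat.card κ = m := by simpa using Nat.card_congr e
  exact ⟨((Equiv.sumCongr (.refl _) (Finite.equivFin κ)).trans finSumFinEquiv).trans
    (finCongr hκ), fun j => by ext; simp⟩

theorem Module.Basis.isUnit_det_toMatrix {ι R M : Type*} [CommRing R] [AddCommGroup M]
    [Module R M] [Fintype ι] [DecidableEq ι] (b b' : Basis ι R M) : IsUnit (b.toMatrix b').det :=
  letI := b.invertibleToMatrix b'
  Matrix.isUnit_det_of_invertible _

theorem complete_to_unimodular_general (m n : ℕ) (hmn : n ≤ m)
    (A : Matrix (Fin m) (Fin n) ℤ) (B : Matrix (Fin n) (Fin m) ℤ)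
    (hBA : B * A = 1) :
    ∃ A' : Matrix (Fin m) (Fin m) ℤ, IsUnit A'.det ∧
      ∀ (i : Fin m) (j : Fin n), A' i (Fin.castLE hmn j) = A i j := by
  have hBA' : B.mulVecLin ∘ₗ A.mulVecLin = LinearMap.id := by
    rw [← Matrix.mulVecLin_mul, hBA, Matrix.mulVecLin_one]
  obtain ⟨κ, b, hb⟩ :=
    Module.Basis.exists_basis_sum_inl_eq_of_comp_eq_id hBA' (Pi.basisFun ℤ (Fin n))
  obtain ⟨e, he⟩ := exists_sumEquiv_fin_inl_eq_castLE hmn (b.indexEquiv (Pi.basisFun ℤ (Fin m)))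
  refine ⟨(Pi.basisFun ℤ (Fin m)).toMatrix (b.reindex e),
    (Pi.basisFun ℤ _).isUnit_det_toMatrix _, fun i j => ?_⟩
  rw [Module.Basis.toMatrix_apply, Pi.basisFun_repr, ← he, Module.Basis.reindex_apply,
    e.symm_apply_apply, hb]
  simp [Matrix.mulVec_single]

/-- A left-invertible `m × n` integer matrix (`m ≥ n`) can be
completed to a matrix in `GL(m, ℤ)` whose first `n` columns are the columns of
`A`. -/
theorem complete_to_unimodular (m n : ℕ) (hn : 0 < n) (hm : 0 < m) (hmn : n ≤ m)
    (A : Matrix (Fin m) (Fin n) ℤ) (B : Matrix (Fin n) (Fin m) ℤ)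
    (hBA : B * A = 1) :
    ∃ A' : Matrix (Fin m) (Fin m) ℤ, IsUnit A'.det ∧
      ∀ (i : Fin m) (j : Fin n), A' i (Fin.castLE hmn j) = A i j :=
  complete_to_unimodular_general m n hmn A B hBA
end

section
/- Let A and B be m × n integer matrices. Suppose there exist integer matrices M and N (of size m × m) with MA = B and NB = A. Then there exists T ∈ GL(m, ℤ) with TA = B. -/
/-!
The hypotheses say that the rows of `A` and of `B` span the same submodule `L` of `ℤⁿ`, i.e. the
maps `x ↦ xᵀA` and `x ↦ xᵀB` are two surjections from `ℤᵐ` onto `L`. A surjection `ℤᵐ → L` onto the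
free module `L` splits, `ℤᵐ ≅ ker ⊕ L`, and by rank–nullity both kernels are free of rank
`m - rank L`. Matching the kernels and the complements gives an automorphism `S` of `ℤᵐ`
carrying one surjection to the other, and `T` is the matrix of `S`.
-/

open LinearMap Module Matrix

namespace LinearMap

variable {R M L : Type*} [CommRing R] [AddCommGroup M] [Module R M] [AddCommGroup L] [Module R L]

theorem exists_linearEquiv_prod_ker_of_surjective [Projective R L] (f : M →ₗ[R] L)
    (hf : Function.Surjective f) : ∃ e : M ≃ₗ[R] ker f × L, ∀ x, (e x).2 = f x := by
  obtain ⟨s, hs⟩ := projective_lifting_property f LinearMap.id hf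
  let e := f.exact_subtype_ker_map.splitSurjectiveEquiv (ker f).injective_subtype ⟨s, hs⟩
  exact ⟨e.1, fun x => (LinearMap.congr_fun e.2.2 x).symm⟩

variable [IsDomain R]

theorem finrank_ker_add_finrank_of_surjective [Module.Finite R M]
    (f : M →ₗ[R] L) (hf : Function.Surjective f) :
    finrank R (ker f) + finrank R L = finrank R M := by
  rw [← (f.quotKerEquivOfSurjective hf).finrank_eq, add_comm]
  exact (ker f).finrank_quotient_add_finrank

variable [IsPrincipalIdealRing R] [IsTorsionFree R M] [Module.Finite R M]

theorem exists_linearEquiv_comp_eq_of_surjective [Projective R L] (f g : M →ₗ[R] L)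
    (hf : Function.Surjective f) (hg : Function.Surjective g) :
    ∃ S : M ≃ₗ[R] M, f ∘ₗ S = g := by
  obtain ⟨ef, hef⟩ := f.exists_linearEquiv_prod_ker_of_surjective hf
  obtain ⟨eg, heg⟩ := g.exists_linearEquiv_prod_ker_of_surjective hg
  have hrank : finrank R (ker g) = finrank R (ker f) := by
    have hf_rank := f.finrank_ker_add_finrank_of_surjective hf
    have hg_rank := g.finrank_ker_add_finrank_of_surjective hg
    omega
  -- the kernels are finitely generated and torsion-free over a PID, hence free
  let e : ker g ≃ₗ[R] ker f := LinearEquiv.ofFinrankEq _ _ hrank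
  refine ⟨eg.trans ((e.prodCongr (LinearEquiv.refl R L)).trans ef.symm), LinearMap.ext fun x => ?_⟩
  simpa [← hef] using heg x

theorem exists_linearEquiv_comp_eq_of_range_eq {N : Type*} [AddCommGroup N] [Module R N]
    [IsTorsionFree R N] (f g : M →ₗ[R] N) (h : range f = range g) :
    ∃ S : M ≃ₗ[R] M, f ∘ₗ S = g := by
  have hg : ∀ x, g x ∈ range f := fun x => h ▸ mem_range_self g x
  have hg_surj : Function.Surjective (g.codRestrict (range f) hg) := by
    rintro ⟨y, hy⟩
    obtain ⟨x, rfl⟩ := h ▸ hy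
    exact ⟨x, rfl⟩
  -- `range f` is finitely generated and torsion-free, hence free and projective
  obtain ⟨S, hS⟩ := exists_linearEquiv_comp_eq_of_surjective f.rangeRestrict _
    f.surjective_rangeRestrict hg_surj
  exact ⟨S, LinearMap.ext fun x => congrArg Subtype.val (LinearMap.congr_fun hS x)⟩

end LinearMap

theorem Matrix.exists_isUnit_det_mul_eq_of_range_mulVecLin_eq {R m n : Type*} [CommRing R]
    [IsDomain R] [IsPrincipalIdealRing R] [Fintype m] [DecidableEq m] [Fintype n]
    {P Q : Matrix n m R} (h : range P.mulVecLin = range Q.mulVecLin) :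
    ∃ U : Matrix m m R, IsUnit U.det ∧ P * U = Q := by
  obtain ⟨S, hS⟩ := P.mulVecLin.exists_linearEquiv_comp_eq_of_range_eq Q.mulVecLin h
  refine ⟨toMatrix' S, by rw [LinearMap.det_toMatrix']; exact S.isUnit_det', ?_⟩
  apply toLin'.injective
  rw [toLin'_mul, toLin'_toMatrix']
  exact hS

/-- If two `m × n` integer matrices `A`, `B` satisfy
`M * A = B` and `N * B = A` for some integer matrices `M`, `N`, then
`T * A = B` for some `T ∈ GL(m, ℤ)`. -/
theorem unimodular_of_mutual_left_multiples (m n : ℕ)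
    (A B : Matrix (Fin m) (Fin n) ℤ) (M N : Matrix (Fin m) (Fin m) ℤ)
    (hM : M * A = B) (hN : N * B = A) :
    ∃ T : Matrix (Fin m) (Fin m) ℤ, IsUnit T.det ∧ T * A = B := by
  have hcols : range Aᵀ.mulVecLin = range Bᵀ.mulVecLin := by
    apply le_antisymm
    · rw [← hN, transpose_mul, mulVecLin_mul]
      exact range_comp_le_range _ _
    · rw [← hM, transpose_mul, mulVecLin_mul]
      exact range_comp_le_range _ _
  obtain ⟨U, hU, hAU⟩ := exists_isUnit_det_mul_eq_of_range_mulVecLin_eq hcols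
  refine ⟨Uᵀ, by rwa [det_transpose], ?_⟩
  rw [← transpose_transpose B, ← hAU, transpose_mul, transpose_transpose]
end
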